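/- arXiv:1803.04184 — 8 statements merged into one kernel-verified Lean document; each statement's English description precedes it below -/
import Mathlib

section
/- Let θ > 0 and λ > 0. Define M : ℝ → ℝ by M(y) = 1 for y ≤ 0 and M(x) = (θ/(θ+λ))^⌈x⌉ for x > 0 (where ⌈x⌉ is the ceiling of x). Then M satisfies the differential-difference equation θ·(M(x−1) − M(x)) = λ·M(x) for every x > 0, and M(x) → 0 as x → +∞. -/
/-! With `r = θ/(θ+λ)` one has `θ(1 - r) = λr`, and on `x > 0` the function is `M(x) = r^⌈x⌉`
while `M(x - 1) = r^(⌈x⌉ - 1)` (for `0 < x ≤ 1` this is `r⁰ = 1`, the outer condition). The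
difference equation is therefore `r^(⌈x⌉ - 1)` times `θ(1 - r) = λr`, and `M(x) → 0` because
`0 < r < 1`. -/

open Filter Topology

lemma mul_one_sub_div_add_eq_mul_div_add {K : Type*} [Field K] {a b : K} (hab : a + b ≠ 0) :
    a * (1 - a / (a + b)) = b * (a / (a + b)) := by
  field_simp
  ring

lemma tendsto_zpow_ceil_atTop_nhds_zero {r : ℝ} (hr : |r| < 1) :
    Tendsto (fun x : ℝ => r ^ ⌈x⌉) atTop (𝓝 0) := by
  refine ((tendsto_pow_atTop_nhds_zero_of_abs_lt_one hr).comp tendsto_nat_ceil_atTop).congr' ?_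
  filter_upwards [eventually_ge_atTop 0] with x hx
  simp [← Int.natCast_ceil_eq_ceil hx]

lemma apply_sub_one_eq_zpow_ceil_sub_one {M : ℝ → ℝ} {r : ℝ} (hM0 : ∀ y ≤ 0, M y = 1)
    (hMpos : ∀ x, 0 < x → M x = r ^ ⌈x⌉) {x : ℝ} (hx : 0 < x) :
    M (x - 1) = r ^ (⌈x⌉ - 1) := by
  rcases le_or_gt x 1 with hx1 | hx1
  · have hceil : ⌈x⌉ = 1 := Int.ceil_eq_iff.2 ⟨by simpa using hx, by simpa using hx1⟩
    rw [hM0 _ (by linarith), hceil, sub_self, zpow_zero]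
  · rw [hMpos _ (by linarith), Int.ceil_sub_one]

/-- For the Poisson case, `M(y) = 1` for `y ≤ 0` and `M(x) = (θ/(θ+λ))^⌈x⌉` for `x > 0`
satisfies `θ(M(x-1) - M(x)) = λ M(x)` for all `x > 0`, and `M(x) → 0` as `x → +∞`. -/
theorem stmt_0 (θ lam : ℝ) (hθ : 0 < θ) (hlam : 0 < lam)
    (M : ℝ → ℝ)
    (hM0 : ∀ y : ℝ, y ≤ 0 → M y = 1)
    (hMpos : ∀ x : ℝ, 0 < x → M x = (θ / (θ + lam)) ^ (⌈x⌉ : ℤ)) :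
    (∀ x : ℝ, 0 < x → θ * (M (x - 1) - M x) = lam * M x) ∧
      Filter.Tendsto M Filter.atTop (nhds 0) := by
  set r := θ / (θ + lam)
  have hsum : 0 < θ + lam := by linarith
  have hr_pos : 0 < r := div_pos hθ hsum
  have hr_lt_one : |r| < 1 := by
    rw [abs_of_pos hr_pos, div_lt_one hsum]
    linarith
  have hroot : θ * (1 - r) = lam * r := mul_one_sub_div_add_eq_mul_div_add hsum.ne'
  refine ⟨fun x hx => ?_, (tendsto_zpow_ceil_atTop_nhds_zero hr_lt_one).congr' ?_⟩
  · have hstep : r ^ ⌈x⌉ = r ^ (⌈x⌉ - 1) * r := by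
      rw [← zpow_add_one₀ hr_pos.ne', sub_add_cancel]
    rw [apply_sub_one_eq_zpow_ceil_sub_one hM0 hMpos hx, hMpos x hx, hstep]
    linear_combination r ^ (⌈x⌉ - 1) * hroot
  · filter_upwards [eventually_gt_atTop 0] with x hx using (hMpos x hx).symm
end

section
/- Let θ > 0 and λ > 0. Define M : ℝ → ℝ by M(y) = 1 for y ≤ 0 and M(x) = θ^{⌊x⌋+1} · ∏_{k=0}^{⌊x⌋} (θ + λ(x−k))^{-1} for x > 0. Then for every non-integer x > 0, θ·(M(x−1) − M(x)) = λ·x·M(x). -/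
/-!
Splitting off the factor `k = 0` of the product and shifting `k ↦ k + 1` gives
`M(x) = θ (θ + λx)⁻¹ M(x - 1)` for `x > 0`; for `0 < x < 1` the remaining product is empty and
matches `M(x - 1) = 1`. The equation is this recursion rearranged.
-/

open Finset

theorem pow_mul_prod_inv_succ {K : Type*} [Field K] (θ lam x : K) (n : ℕ) :
    θ ^ (n + 1) * ∏ k ∈ range (n + 1), (θ + lam * (x - k))⁻¹ =
      θ * (θ + lam * x)⁻¹ * (θ ^ n * ∏ k ∈ range n, (θ + lam * (x - 1 - k))⁻¹) := by
  have hshift : ∀ k : ℕ, x - ((k + 1 : ℕ) : K) = x - 1 - k := fun k => by push_cast; ring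
  simp only [prod_range_succ', hshift, Nat.cast_zero, sub_zero, pow_succ]
  ring

theorem Int.toNat_floor_eq_toNat_floor_sub_one_add_one {α : Type*} [Ring α] [LinearOrder α]
    [IsStrictOrderedRing α] [FloorRing α] {x : α} (hx : 1 ≤ x) :
    ⌊x⌋.toNat = ⌊x - 1⌋.toNat + 1 := by
  have hfloor : 1 ≤ ⌊x⌋ := Int.le_floor.2 (by exact_mod_cast hx)
  rw [Int.floor_sub_one]
  omega

/-- For the Poisson case, the Laplace transform of the first-passage area,
`M(y) = 1` for `y ≤ 0` and `M(x) = θ^(⌊x⌋+1) ∏_{k=0}^{⌊x⌋} (θ + λ(x-k))⁻¹` for `x > 0`,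
satisfies `θ(M(x-1) - M(x)) = λ x M(x)` for every non-integer `x > 0`. -/
theorem stmt_2 (θ lam : ℝ) (hθ : 0 < θ) (hlam : 0 < lam)
    (M : ℝ → ℝ)
    (hM0 : ∀ y : ℝ, y ≤ 0 → M y = 1)
    (hMpos : ∀ x : ℝ, 0 < x →
      M x = θ ^ (⌊x⌋.toNat + 1) *
        ∏ k ∈ Finset.range (⌊x⌋.toNat + 1), (θ + lam * (x - (k : ℝ)))⁻¹) :
    ∀ x : ℝ, 0 < x → (¬ ∃ n : ℤ, x = (n : ℝ)) →
      θ * (M (x - 1) - M x) = lam * x * M x := by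
  intro x hx hnint
  have hrec : M x = θ * (θ + lam * x)⁻¹ * M (x - 1) := by
    rw [hMpos x hx, pow_mul_prod_inv_succ]
    congr 1
    rcases lt_or_gt_of_ne (fun h : x = 1 => hnint ⟨1, by simp [h]⟩) with hx1 | hx1
    · rw [hM0 _ (by linarith), Int.floor_eq_zero_iff.2 ⟨hx.le, hx1⟩]
      simp
    · rw [hMpos _ (by linarith), Int.toNat_floor_eq_toNat_floor_sub_one_add_one hx1.le]
  have hne : θ + lam * x ≠ 0 := by positivity
  rw [hrec]
  field_simp
  ring
end

section
/- Let θ > 0 and n ∈ ℕ, n ≥ 1. The function g(λ) = ∏_{k=1}^{n} θ/(θ + kλ) has second derivative at λ = 0 equal to n(n+1)(3n² + 7n + 2)/(12θ²). -/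
/-!
The logarithmic derivative of `g(λ) = ∏ₖ θ / (θ + kλ)` is `∑ₖ -k / (θ + kλ)`, and
`g'' = g · ((log g)'² + (log g)'')`. At `λ = 0` we have `g(0) = 1`, `(log g)'(0) = -(∑ k) / θ` and
`(log g)''(0) = (∑ k²) / θ²`, so `g''(0) = ((∑ k)² + ∑ k²) / θ²`; the power sums over `1, …, n`
turn this into the stated polynomial in `n`.
-/

open Filter Finset Topology

section LogDeriv

variable {𝕜 : Type*} [NontriviallyNormedField 𝕜]

theorem deriv_deriv_eq_mul_logDeriv_sq_add {f : 𝕜 → 𝕜} {a L : 𝕜}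
    (hf : ∀ᶠ x in 𝓝 a, DifferentiableAt 𝕜 f x) (ha : f a ≠ 0)
    (hL : HasDerivAt (logDeriv f) L a) :
    deriv (deriv f) a = f a * (logDeriv f a ^ 2 + L) := by
  have hfa : DifferentiableAt 𝕜 f a := hf.self_of_nhds
  have hderiv : deriv f =ᶠ[𝓝 a] fun x ↦ f x * logDeriv f x := by
    filter_upwards [hfa.continuousAt.eventually_ne ha] with x hx
    rw [logDeriv_apply, mul_div_cancel₀ _ hx]
  rw [hderiv.deriv_eq, (hfa.hasDerivAt.fun_mul hL).deriv, logDeriv_apply]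
  field_simp

theorem hasDerivAt_div_add_mul (a b c x : 𝕜) (h : b + c * x ≠ 0) :
    HasDerivAt (fun y ↦ a / (b + c * y)) (-(a * c) / (b + c * x) ^ 2) x :=
  ((hasDerivAt_const x a).fun_div (((hasDerivAt_id' x).const_mul c).const_add b) h).congr_deriv
    (by ring)

theorem logDeriv_div_add_mul {θ c x : 𝕜} (hθ : θ ≠ 0) (h : θ + c * x ≠ 0) :
    logDeriv (fun y ↦ θ / (θ + c * y)) x = -c / (θ + c * x) := by
  rw [logDeriv_apply, (hasDerivAt_div_add_mul θ θ c x h).deriv]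
  field_simp

variable {ι : Type*} (s : Finset ι) (c : ι → 𝕜) {θ : 𝕜}

theorem eventually_forall_add_mul_ne_zero (hθ : θ ≠ 0) :
    ∀ᶠ x in 𝓝 0, ∀ i ∈ s, θ + c i * x ≠ 0 := by
  refine (eventually_all_finset s).2 fun i _ ↦ ?_
  have hcont : ContinuousAt (fun x ↦ θ + c i * x) 0 := by fun_prop
  exact hcont.eventually_ne (by simpa using hθ)

theorem logDeriv_prod_div_add_mul {x : 𝕜} (hθ : θ ≠ 0) (hx : ∀ i ∈ s, θ + c i * x ≠ 0) :
    logDeriv (fun y ↦ ∏ i ∈ s, θ / (θ + c i * y)) x = ∑ i ∈ s, -c i / (θ + c i * x) := by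
  rw [logDeriv_prod (f := fun i y ↦ θ / (θ + c i * y)) (fun i hi ↦ div_ne_zero hθ (hx i hi))
    fun i hi ↦ by fun_prop (disch := exact hx i hi)]
  exact sum_congr rfl fun i hi ↦ logDeriv_div_add_mul hθ (hx i hi)

theorem hasDerivAt_sum_neg_div_add_mul {x : 𝕜} (hx : ∀ i ∈ s, θ + c i * x ≠ 0) :
    HasDerivAt (fun y ↦ ∑ i ∈ s, -c i / (θ + c i * y))
      (∑ i ∈ s, c i ^ 2 / (θ + c i * x) ^ 2) x :=
  HasDerivAt.fun_sum fun i hi ↦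
    (hasDerivAt_div_add_mul (-c i) θ (c i) x (hx i hi)).congr_deriv (by ring)

theorem deriv_deriv_prod_div_add_mul_zero (hθ : θ ≠ 0) :
    deriv (deriv fun y ↦ ∏ i ∈ s, θ / (θ + c i * y)) 0
      = ((∑ i ∈ s, c i) ^ 2 + ∑ i ∈ s, c i ^ 2) / θ ^ 2 := by
  have hne := eventually_forall_add_mul_ne_zero s c hθ
  have hlog : logDeriv (fun y ↦ ∏ i ∈ s, θ / (θ + c i * y)) =ᶠ[𝓝 0]
      fun x ↦ ∑ i ∈ s, -c i / (θ + c i * x) := by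
    filter_upwards [hne] with x hx
    exact logDeriv_prod_div_add_mul s c hθ hx
  have hdiff : ∀ᶠ x in 𝓝 (0 : 𝕜), DifferentiableAt 𝕜 (fun y ↦ ∏ i ∈ s, θ / (θ + c i * y)) x := by
    filter_upwards [hne] with x hx
    fun_prop (disch := simp_all)
  have hL := (hasDerivAt_sum_neg_div_add_mul s c hne.self_of_nhds).congr_of_eventuallyEq hlog
  rw [deriv_deriv_eq_mul_logDeriv_sq_add hdiff (by simp [hθ]) hL, hlog.eq_of_nhds]
  simp only [mul_zero, add_zero, div_self hθ, prod_const_one, one_mul, ← sum_div, neg_div,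
    sum_neg_distrib]
  ring

end LogDeriv

section PowerSums

variable {K : Type*} [Field K] [CharZero K]

theorem sum_Icc_one_natCast (n : ℕ) : ∑ k ∈ Icc 1 n, (k : K) = n * (n + 1) / 2 := by
  induction n with
  | zero => simp
  | succ m ih =>
    rw [sum_Icc_succ_top (by omega), ih]
    push_cast
    ring

theorem sum_Icc_one_natCast_sq (n : ℕ) :
    ∑ k ∈ Icc 1 n, (k : K) ^ 2 = n * (n + 1) * (2 * n + 1) / 6 := by
  induction n with
  | zero => simp
  | succ m ih =>
    rw [sum_Icc_succ_top (by omega), ih]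
    push_cast
    ring

end PowerSums

theorem stmt_4_general (θ : ℝ) (hθ : 0 < θ) (n : ℕ) :
    deriv (deriv (fun lam : ℝ => ∏ k ∈ Finset.Icc 1 n, θ / (θ + (k : ℝ) * lam))) 0
      = (n : ℝ) * ((n : ℝ) + 1) * (3 * (n : ℝ) ^ 2 + 7 * (n : ℝ) + 2) / (12 * θ ^ 2) := by
  rw [deriv_deriv_prod_div_add_mul_zero _ _ hθ.ne', sum_Icc_one_natCast, sum_Icc_one_natCast_sq]
  field_simp
  ring

/-- For the Poisson case with integer starting point `n ≥ 1`, the Laplace transform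
`g(λ) = ∏_{k=1}^{n} θ/(θ + kλ)` of the first-passage area has second derivative at
`λ = 0` equal to `n(n+1)(3n² + 7n + 2)/(12θ²)`, i.e. `E[A(n)²]`. -/
theorem stmt_4 (θ : ℝ) (hθ : 0 < θ) (n : ℕ) (hn : 1 ≤ n) :
    deriv (deriv (fun lam : ℝ => ∏ k ∈ Finset.Icc 1 n, θ / (θ + (k : ℝ) * lam))) 0
      = (n : ℝ) * ((n : ℝ) + 1) * (3 * (n : ℝ) ^ 2 + 7 * (n : ℝ) + 2) / (12 * θ ^ 2) :=
  stmt_4_general θ hθ n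
end

section
/- Let θ > 0 and λ₁, λ₂ ≥ 0 with (λ₁,λ₂) ≠ (0,0). Define M : ℝ → ℝ by M(y) = 1 for y ≤ 0 and M(x) = θ^{⌊x⌋+1} · ∏_{k=0}^{⌊x⌋} (λ₁ + λ₂(x−k) + θ)^{-1} for x > 0. Then for every non-integer x > 0, θ·(M(x−1) − M(x)) = (λ₁ + λ₂x)·M(x). -/
open Finset

lemma Int.toNat_floor_sub_one_add_one {x : ℝ} (hx : 1 ≤ x) :
    ⌊x - 1⌋.toNat + 1 = ⌊x⌋.toNat := by
  have : 1 ≤ ⌊x⌋ := Int.le_floor.2 (by exact_mod_cast hx)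
  rw [Int.floor_sub_one]
  omega

lemma Finset.prod_range_succ_comp_sub {α : Type*} [CommMonoid α] (f : ℝ → α) (x : ℝ) (n : ℕ) :
    ∏ k ∈ range (n + 1), f (x - k) = f x * ∏ k ∈ range n, f (x - 1 - k) := by
  rw [prod_range_succ', mul_comm]
  simp only [Nat.cast_add, Nat.cast_one, Nat.cast_zero, sub_zero, sub_add_eq_sub_sub_swap]

-- The recursion fails at `x = 1` only: there the boundary value `M 0 = 1` differs from the
-- value `θ (λ₁ + θ)⁻¹` that the product formula would assign to `0`.
lemma eq_mul_apply_sub_one_of_prod_formula {θ l1 l2 : ℝ} {M : ℝ → ℝ}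
    (hM0 : ∀ y : ℝ, y ≤ 0 → M y = 1)
    (hMpos : ∀ x : ℝ, 0 < x →
      M x = θ ^ (⌊x⌋.toNat + 1) * ∏ k ∈ range (⌊x⌋.toNat + 1), (l1 + l2 * (x - k) + θ)⁻¹)
    {x : ℝ} (hx : 0 < x) (hx1 : x ≠ 1) :
    M x = θ * (l1 + l2 * x + θ)⁻¹ * M (x - 1) := by
  rw [hMpos x hx, pow_succ', prod_range_succ_comp_sub (fun y => (l1 + l2 * y + θ)⁻¹)]
  suffices h : M (x - 1) =
      θ ^ ⌊x⌋.toNat * ∏ k ∈ range ⌊x⌋.toNat, (l1 + l2 * (x - 1 - k) + θ)⁻¹ by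
    rw [h]; ring
  rcases hx1.lt_or_gt with hlt | hgt
  · have hfloor : ⌊x⌋ = 0 := Int.floor_eq_zero_iff.2 ⟨hx.le, hlt⟩
    simp [hfloor, hM0 (x - 1) (by linarith)]
  · rw [hMpos (x - 1) (by linarith), Int.toNat_floor_sub_one_add_one hgt.le]

theorem stmt_6_general (θ l1 l2 : ℝ) (hθ : 0 < θ) (hl1 : 0 ≤ l1) (hl2 : 0 ≤ l2)
    (M : ℝ → ℝ)
    (hM0 : ∀ y : ℝ, y ≤ 0 → M y = 1)
    (hMpos : ∀ x : ℝ, 0 < x →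
      M x = θ ^ (⌊x⌋.toNat + 1) *
        ∏ k ∈ Finset.range (⌊x⌋.toNat + 1), (l1 + l2 * (x - (k : ℝ)) + θ)⁻¹) :
    ∀ x : ℝ, 0 < x → (¬ ∃ n : ℤ, x = (n : ℝ)) →
      θ * (M (x - 1) - M x) = (l1 + l2 * x) * M x := by
  intro x hx hnint
  have hx1 : x ≠ 1 := fun h => hnint ⟨1, by simp [h]⟩
  have hc : l1 + l2 * x + θ ≠ 0 := by positivity
  rw [eq_mul_apply_sub_one_of_prod_formula hM0 hMpos hx hx1]
  field_simp
  ring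

/-- For the Poisson case, the joint Laplace transform of `(τ(x), A(x))` for non-integer `x`,
`M(y) = 1` for `y ≤ 0` and `M(x) = θ^(⌊x⌋+1) ∏_{k=0}^{⌊x⌋} (λ₁ + λ₂(x-k) + θ)⁻¹` for `x > 0`,
satisfies `θ(M(x-1) - M(x)) = (λ₁ + λ₂ x) M(x)` for every non-integer `x > 0`. -/
theorem stmt_6 (θ l1 l2 : ℝ) (hθ : 0 < θ) (hl1 : 0 ≤ l1) (hl2 : 0 ≤ l2)
    (hne : (l1, l2) ≠ (0, 0))
    (M : ℝ → ℝ)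
    (hM0 : ∀ y : ℝ, y ≤ 0 → M y = 1)
    (hMpos : ∀ x : ℝ, 0 < x →
      M x = θ ^ (⌊x⌋.toNat + 1) *
        ∏ k ∈ Finset.range (⌊x⌋.toNat + 1), (l1 + l2 * (x - (k : ℝ)) + θ)⁻¹) :
    ∀ x : ℝ, 0 < x → (¬ ∃ n : ℤ, x = (n : ℝ)) →
      θ * (M (x - 1) - M x) = (l1 + l2 * x) * M x :=
  stmt_6_general θ l1 l2 hθ hl1 hl2 M hM0 hMpos
end

section
/- Let θ > 0, let N ∈ ℕ and x ∈ ℝ. Then ∑_{n=0}^{N} ((N−n)+1)(4(x−n) − (N−n))/(2θ²) = (N+1)(N+2)(2x−N)/(2θ²). In particular, for non-integer x > 0 with N = ⌊x⌋, the solution of V(x) = V(x−1) + (⌊x⌋+1)(4x−⌊x⌋)/(2θ²) with V(y) = 0 for y ≤ 0 is V(x) = (⌊x⌋+1)(⌊x⌋+2)(2x−⌊x⌋)/(2θ²). -/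
/-!
Unrolling the recurrence `⌊x⌋ + 1` times from a non-integer `x > 0` passes only through
non-integer positive points and ends at `x - ⌊x⌋ - 1 < 0`, where `V` vanishes. Hence `V x` is the
sum of the increments at `x - n`, `0 ≤ n ≤ ⌊x⌋`, and since `⌊x - n⌋ = ⌊x⌋ - n` this is the sum of
the first claim with `N = ⌊x⌋`. That sum is evaluated by induction on `N`: splitting off the
term `n = 0` leaves the same sum for `N - 1` at the point `x - 1`.
-/

open Finset

theorem sum_range_mul_four_sub (N : ℕ) (x : ℝ) :
    ∑ n ∈ range (N + 1), (((N : ℝ) - n) + 1) * (4 * (x - n) - ((N : ℝ) - n))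
      = ((N : ℝ) + 1) * ((N : ℝ) + 2) * (2 * x - N) := by
  induction N generalizing x with
  | zero => rw [sum_range_one]; push_cast; ring
  | succ N ih =>
    rw [sum_range_succ']
    have hshift : ∀ n ∈ range (N + 1),
        ((((N + 1 : ℕ) : ℝ) - ((n + 1 : ℕ) : ℝ)) + 1)
            * (4 * (x - ((n + 1 : ℕ) : ℝ)) - (((N + 1 : ℕ) : ℝ) - ((n + 1 : ℕ) : ℝ)))
          = (((N : ℝ) - n) + 1) * (4 * ((x - 1) - n) - ((N : ℝ) - n)) := by
      intro n _
      push_cast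
      ring
    rw [sum_congr rfl hshift, ih]
    push_cast
    ring

theorem not_exists_intCast_eq_sub_natCast {x : ℝ} (hx : ¬ ∃ n : ℤ, x = n) (m : ℕ) :
    ¬ ∃ n : ℤ, x - m = n := by
  rintro ⟨n, hn⟩
  exact hx ⟨n + m, by push_cast; linarith⟩

theorem eq_add_sum_range_of_eq_sub_one_add {V g : ℝ → ℝ}
    (hV : ∀ x : ℝ, 0 < x → (¬ ∃ n : ℤ, x = n) → V x = V (x - 1) + g x)
    {x : ℝ} (hx : ¬ ∃ n : ℤ, x = n) :
    ∀ N : ℕ, (N : ℝ) < x → V x = V (x - (N + 1)) + ∑ n ∈ range (N + 1), g (x - n) := by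
  intro N
  induction N with
  | zero =>
    intro hpos
    simpa using hV x (by simpa using hpos) hx
  | succ N ih =>
    intro hlt
    push_cast at hlt
    have hstep := hV (x - (N + 1)) (by linarith) (by
      simpa using not_exists_intCast_eq_sub_natCast hx (N + 1))
    rw [ih (by linarith), hstep, sum_range_succ _ (N + 1)]
    push_cast
    rw [show x - ((N : ℝ) + 1) - 1 = x - ((N : ℝ) + 1 + 1) by ring]
    ring

theorem stmt_8_general (θ : ℝ) :
    (∀ (N : ℕ) (x : ℝ),
      ∑ n ∈ Finset.range (N + 1),
          (((N : ℝ) - (n : ℝ)) + 1) * (4 * (x - (n : ℝ)) - ((N : ℝ) - (n : ℝ))) / (2 * θ ^ 2)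
        = ((N : ℝ) + 1) * ((N : ℝ) + 2) * (2 * x - (N : ℝ)) / (2 * θ ^ 2)) ∧
    (∀ V : ℝ → ℝ, (∀ y : ℝ, y ≤ 0 → V y = 0) →
      (∀ x : ℝ, 0 < x → (¬ ∃ n : ℤ, x = (n : ℝ)) →
        V x = V (x - 1) + ((⌊x⌋ : ℝ) + 1) * (4 * x - (⌊x⌋ : ℝ)) / (2 * θ ^ 2)) →
      ∀ x : ℝ, 0 < x → (¬ ∃ n : ℤ, x = (n : ℝ)) →
        V x = ((⌊x⌋ : ℝ) + 1) * ((⌊x⌋ : ℝ) + 2) * (2 * x - (⌊x⌋ : ℝ)) / (2 * θ ^ 2)) := by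
  have hsum : ∀ (N : ℕ) (x : ℝ),
      ∑ n ∈ range (N + 1),
          (((N : ℝ) - n) + 1) * (4 * (x - n) - ((N : ℝ) - n)) / (2 * θ ^ 2)
        = ((N : ℝ) + 1) * ((N : ℝ) + 2) * (2 * x - N) / (2 * θ ^ 2) := by
    intro N x
    rw [← sum_div, sum_range_mul_four_sub]
  refine ⟨hsum, fun V hV0 hV x hx hxint => ?_⟩
  obtain ⟨N, hN⟩ : ∃ N : ℕ, ⌊x⌋ = N := Int.eq_ofNat_of_zero_le (Int.floor_nonneg.2 hx.le)
  have hN' : (⌊x⌋ : ℝ) = N := by exact_mod_cast hN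
  have hNx : (N : ℝ) < x :=
    hN' ▸ (Int.floor_le x).lt_of_ne fun h => hxint ⟨⌊x⌋, h.symm⟩
  have hfloor : ∀ n : ℕ, (⌊x - n⌋ : ℝ) = (N : ℝ) - n := by
    intro n
    simp [Int.floor_sub_natCast, hN]
  rw [eq_add_sum_range_of_eq_sub_one_add hV hxint N hNx,
    hV0 _ (by linarith [Int.lt_floor_add_one x]), zero_add, hN', ← hsum N x]
  refine sum_congr rfl fun n _ => ?_
  rw [hfloor]

/-- For the Poisson case with non-integer starting point, `E[τ(x)A(x)]`:
the sum `∑_{n=0}^{N} ((N-n)+1)(4(x-n) - (N-n))/(2θ²)` equals `(N+1)(N+2)(2x-N)/(2θ²)`;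
in particular, for non-integer `x > 0` with `N = ⌊x⌋`, the solution of
`V(x) = V(x-1) + (⌊x⌋+1)(4x-⌊x⌋)/(2θ²)` with `V(y) = 0` for `y ≤ 0` is
`V(x) = (⌊x⌋+1)(⌊x⌋+2)(2x-⌊x⌋)/(2θ²)`. -/
theorem stmt_8 (θ : ℝ) (hθ : 0 < θ) :
    (∀ (N : ℕ) (x : ℝ),
      ∑ n ∈ Finset.range (N + 1),
          (((N : ℝ) - (n : ℝ)) + 1) * (4 * (x - (n : ℝ)) - ((N : ℝ) - (n : ℝ))) / (2 * θ ^ 2)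
        = ((N : ℝ) + 1) * ((N : ℝ) + 2) * (2 * x - (N : ℝ)) / (2 * θ ^ 2)) ∧
    (∀ V : ℝ → ℝ, (∀ y : ℝ, y ≤ 0 → V y = 0) →
      (∀ x : ℝ, 0 < x → (¬ ∃ n : ℤ, x = (n : ℝ)) →
        V x = V (x - 1) + ((⌊x⌋ : ℝ) + 1) * (4 * x - (⌊x⌋ : ℝ)) / (2 * θ ^ 2)) →
      ∀ x : ℝ, 0 < x → (¬ ∃ n : ℤ, x = (n : ℝ)) →
        V x = ((⌊x⌋ : ℝ) + 1) * ((⌊x⌋ : ℝ) + 2) * (2 * x - (⌊x⌋ : ℝ)) / (2 * θ ^ 2)) :=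
  stmt_8_general θ
end

section
/- Let θ > 0. Define a family of functions V_{m,n} : ℕ → ℝ for m, n ∈ ℕ by: V_{0,0}(x) = 1 for x ≥ 1 and V_{0,0}(0) = 1; for (m,n) ≠ (0,0), V_{m,n}(0) = 0 and θ(V_{m,n}(x) − V_{m,n}(x−1)) = n·x·V_{m,n−1}(x) + m·V_{m−1,n}(x) for x ≥ 1 (where V_{m,n−1} or V_{m−1,n} is taken to be 0 if the corresponding index is negative). Then for every (m,n) ≠ (0,0) there exists a polynomial P ∈ ℝ[X] of degree m + 2n with P(0) = 0 such that V_{m,n}(x) = P(x) for all x ∈ ℕ. -/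
open Polynomial

/-- Discrete antiderivative of a polynomial, with degree and leading coefficient control. -/
lemma antider : ∀ (k : ℕ) (Q : ℝ[X]), Q.natDegree ≤ k → ∃ P : ℝ[X],
    P.natDegree ≤ k + 1 ∧ P.eval 0 = 0 ∧
    (∀ x : ℝ, P.eval (x + 1) - P.eval x = Q.eval (x + 1)) ∧
    (Q.natDegree = k → Q ≠ 0 →
      P.degree = (k + 1 : ℕ) ∧ P.leadingCoeff = Q.leadingCoeff / (k + 1)) := by
  intro k
  induction k with
  | zero =>
    intro Q hQ
    have hQC : Q = C (Q.coeff 0) := (Polynomial.eq_C_of_natDegree_le_zero hQ)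
    refine ⟨C (Q.coeff 0) * X, ?_, by simp, ?_, ?_⟩
    · calc (C (Q.coeff 0) * X).natDegree ≤ X.natDegree := natDegree_C_mul_le _ _
        _ ≤ 1 := by simp [natDegree_X]
    · intro x
      rw [hQC]; simp; ring
    · intro _ hQ0
      have hc : Q.coeff 0 ≠ 0 := by
        intro h; apply hQ0; rw [hQC, h, map_zero]
      constructor
      · rw [degree_C_mul_X hc]; rfl
      · rw [hQC]
        simp [leadingCoeff_mul, leadingCoeff_C, leadingCoeff_X]
  | succ k ih =>
    intro Q hQ
    by_cases hle : Q.natDegree ≤ k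
    · obtain ⟨P, h1, h2, h3, _⟩ := ih Q hle
      refine ⟨P, h1.trans (by omega), h2, h3, ?_⟩
      intro hk _; omega
    ·
      have hd : Q.natDegree = k + 1 := by omega
      have hQ0 : Q ≠ 0 := by
        intro h; rw [h] at hd; simp at hd
      set c := Q.leadingCoeff with hc_def
      have hc : c ≠ 0 := leadingCoeff_ne_zero.mpr hQ0
      have hk2 : ((k : ℝ) + 2) ≠ 0 := by positivity
      set S : ℝ[X] := (X + 1) ^ (k + 2) - X ^ (k + 2) with hS_def
      -- degree facts for S
      have hmonicX1 : ((X + 1 : ℝ[X])).Monic := by simpa using monic_X_add_C (1 : ℝ)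
      have hX1 : ((X + 1 : ℝ[X])).natDegree = 1 := by
        rw [← C_1, natDegree_X_add_C]
      have hmonic : ((X + 1 : ℝ[X])) ^ (k + 2) |>.Monic := hmonicX1.pow _
      have hdeg1 : ((X + 1 : ℝ[X]) ^ (k + 2)).degree = ((k + 2 : ℕ) : WithBot ℕ) := by
        rw [degree_eq_natDegree hmonic.ne_zero, natDegree_pow, hX1, mul_one]
      have hSdeg : S.degree < ((k + 2 : ℕ) : WithBot ℕ) := by
        rw [hS_def]
        calc ((X + 1 : ℝ[X]) ^ (k + 2) - X ^ (k + 2)).degree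
            < ((X + 1 : ℝ[X]) ^ (k + 2)).degree := by
              apply degree_sub_lt
              · rw [hdeg1, degree_X_pow]
              · exact hmonic.ne_zero
              · rw [hmonic.leadingCoeff, (monic_X_pow _).leadingCoeff]
          _ = _ := hdeg1
      have hScoeff : S.coeff (k + 1) = (k + 2 : ℝ) := by
        rw [hS_def, coeff_sub, coeff_X_add_one_pow, coeff_X_pow]
        have : (k + 2).choose (k + 1) = k + 2 := by
          rw [Nat.choose_succ_self_right]
        rw [this]
        simp
      have hSne : S.coeff (k + 1) ≠ 0 := by rw [hScoeff]; positivity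
      have hS0 : S ≠ 0 := fun h => hSne (by simp [h])
      have hSnatdeg : S.natDegree = k + 1 := by
        have h1 : k + 1 ≤ S.natDegree := le_natDegree_of_ne_zero hSne
        have h2 : S.natDegree < k + 2 := by
          rwa [natDegree_lt_iff_degree_lt hS0]
        omega
      have hSlead : S.leadingCoeff = (k + 2 : ℝ) := by
        rw [leadingCoeff, hSnatdeg, hScoeff]
      -- D := C (c/(k+2)) * S
      set D : ℝ[X] := C (c / (k + 2)) * S with hD_def
      have hcc : c / ((k : ℝ) + 2) ≠ 0 := div_ne_zero hc hk2
      have hDdeg : D.degree = ((k + 1 : ℕ) : WithBot ℕ) := by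
        rw [hD_def, degree_C_mul hcc, degree_eq_natDegree hS0, hSnatdeg]
      have hD0 : D ≠ 0 := mul_ne_zero (C_ne_zero.mpr hcc) hS0
      have hDlead : D.leadingCoeff = c := by
        rw [hD_def, leadingCoeff_mul, leadingCoeff_C, hSlead]
        field_simp
      -- Qc := Q.comp (X+1)
      set Qc : ℝ[X] := Q.comp (X + 1) with hQc_def
      have hQcdeg : Qc.natDegree = k + 1 := by
        rw [hQc_def, natDegree_comp, hd, hX1, mul_one]
      have hQclead : Qc.leadingCoeff = c := by
        rw [hQc_def, leadingCoeff_comp (by rw [hX1]; norm_num)]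
        rw [hmonicX1.leadingCoeff, one_pow, mul_one]
      have hQc0 : Qc ≠ 0 := fun h => by
        rw [h] at hQclead; exact hc (by simpa using hQclead.symm)
      -- R := Qc - D
      set R : ℝ[X] := Qc - D with hR_def
      have hRdeg : R.natDegree ≤ k := by
        by_cases hR0 : R = 0
        · simp [hR0]
        have : R.degree < ((k + 1 : ℕ) : WithBot ℕ) := by
          rw [hR_def]
          calc (Qc - D).degree < Qc.degree := by
                apply degree_sub_lt
                · rw [hDdeg, degree_eq_natDegree hQc0, hQcdeg]
                · exact hQc0
                · rw [hQclead, hDlead]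
              _ = _ := by rw [degree_eq_natDegree hQc0, hQcdeg]
        have := (natDegree_lt_iff_degree_lt hR0).mpr this
        omega
      -- Q' := R.comp (X - 1)
      set Q' : ℝ[X] := R.comp (X - C 1) with hQ'_def
      have hQ'deg : Q'.natDegree ≤ k := by
        rw [hQ'_def, natDegree_comp, natDegree_X_sub_C, mul_one]; exact hRdeg
      obtain ⟨P1, hP1deg, hP1z, hP1diff, _⟩ := ih Q' hQ'deg
      -- P := P0 + P1
      set P0 : ℝ[X] := C (c / (k + 2)) * X ^ (k + 2) with hP0_def
      have hP0deg : P0.degree = ((k + 2 : ℕ) : WithBot ℕ) := degree_C_mul_X_pow _ hcc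
      refine ⟨P0 + P1, ?_, ?_, ?_, ?_⟩
      · calc (P0 + P1).natDegree ≤ max P0.natDegree P1.natDegree := natDegree_add_le _ _
          _ ≤ k + 1 + 1 := by
            apply max_le
            · exact (natDegree_C_mul_le _ _).trans (by rw [natDegree_X_pow])
            · omega
      · rw [eval_add, hP1z, hP0_def]; simp
      · intro x
        have h1 : P0.eval (x + 1) - P0.eval x = D.eval x := by
          rw [hP0_def, hD_def, hS_def]; simp; ring
        have h2 : P1.eval (x + 1) - P1.eval x = R.eval x := by
          rw [hP1diff, hQ'_def, eval_comp]; simp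
        have h3 : D.eval x + R.eval x = Q.eval (x + 1) := by
          rw [hR_def, hQc_def]
          simp [eval_comp]
        simp only [eval_add]
        linarith
      · intro _ _
        have hP1lt : P1.degree < P0.degree := by
          rw [hP0deg]
          calc P1.degree ≤ (P1.natDegree : WithBot ℕ) := degree_le_natDegree
            _ ≤ ((k + 1 : ℕ) : WithBot ℕ) := by exact_mod_cast Nat.cast_le.mpr hP1deg
            _ < _ := by exact_mod_cast Nat.lt_succ_self (k+1)
        have hdegP : (P0 + P1).degree = ((k + 1 + 1 : ℕ) : WithBot ℕ) := by
          rw [degree_add_eq_left_of_degree_lt hP1lt, hP0deg]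
        refine ⟨hdegP, ?_⟩
        have hnatP : (P0 + P1).natDegree = k + 2 := natDegree_eq_of_degree_eq_some (by exact_mod_cast hdegP)
        rw [leadingCoeff, hnatP, coeff_add, hP0_def, coeff_C_mul, coeff_X_pow,
          coeff_eq_zero_of_natDegree_lt (by omega : P1.natDegree < k + 2)]
        simp
        ring

/-- Theorem 3.4 of the paper (integer starting point case): the joint moments
`V_{m,n}(x) = E[τ(x)^m A(x)^n]` of the Poisson case, defined recursively by
`V_{0,0} ≡ 1`, `V_{m,n}(0) = 0` and
`θ(V_{m,n}(x) - V_{m,n}(x-1)) = n x V_{m,n-1}(x) + m V_{m-1,n}(x)` for `x ≥ 1`,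
are polynomials in `x` of degree `m + 2n` vanishing at zero. -/
theorem stmt_13 (θ : ℝ) (hθ : 0 < θ)
    (V : ℕ → ℕ → ℕ → ℝ)
    (h00 : ∀ x : ℕ, V 0 0 x = 1)
    (hzero : ∀ m n : ℕ, (m, n) ≠ (0, 0) → V m n 0 = 0)
    (hrec : ∀ m n : ℕ, (m, n) ≠ (0, 0) → ∀ x : ℕ, 1 ≤ x →
      θ * (V m n x - V m n (x - 1))
        = (n : ℝ) * (x : ℝ) * V m (n - 1) x + (m : ℝ) * V (m - 1) n x) :
    ∀ m n : ℕ, (m, n) ≠ (0, 0) →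
      ∃ P : Polynomial ℝ, P.degree = (m + 2 * n : ℕ) ∧ P.eval 0 = 0 ∧
        ∀ x : ℕ, V m n x = P.eval (x : ℝ) := by
  suffices H : ∀ s m n : ℕ, m + n ≤ s →
      ∃ P : Polynomial ℝ, P.degree = ((m + 2 * n : ℕ) : WithBot ℕ) ∧
        ((m, n) ≠ (0, 0) → P.eval 0 = 0) ∧ (∀ x : ℕ, V m n x = P.eval (x : ℝ)) ∧
        0 < P.leadingCoeff by
    intro m n hmn
    obtain ⟨P, h1, h2, h3, _⟩ := H (m + n) m n le_rfl
    exact ⟨P, h1, h2 hmn, h3⟩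
  intro s
  induction s with
  | zero =>
    intro m n hmn
    have hm : m = 0 := by omega
    have hn : n = 0 := by omega
    subst hm; subst hn
    exact ⟨1, by simp, fun h => absurd rfl h, fun x => by rw [h00]; simp, by simp⟩
  | succ s ih =>
    intro m n hmn
    by_cases h0 : (m, n) = (0, 0)
    · have hm : m = 0 := by simpa using congrArg Prod.fst h0
      have hn : n = 0 := by simpa using congrArg Prod.snd h0
      subst hm; subst hn
      exact ⟨1, by simp, fun h => absurd rfl h, fun x => by rw [h00]; simp, by simp⟩
    · have h0' : ¬(m = 0 ∧ n = 0) := by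
        intro ⟨h1, h2⟩; exact h0 (by rw [h1, h2])
      set d : ℕ := m + 2 * n - 1 with hd_def
      have hd1 : 1 ≤ m + 2 * n := by omega
      -- polynomial for V m (n-1)
      obtain ⟨P1, hP1, hP1z⟩ : ∃ P1 : ℝ[X],
          (n ≠ 0 → P1.degree = ((m + 2 * (n - 1) : ℕ) : WithBot ℕ) ∧
            (∀ x : ℕ, V m (n - 1) x = P1.eval (x : ℝ)) ∧ 0 < P1.leadingCoeff) ∧
          (n = 0 → P1 = 0) := by
        rcases Nat.eq_zero_or_pos n with h | h
        · exact ⟨0, fun hn => absurd h hn, fun _ => rfl⟩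
        · obtain ⟨P1, hd', _, he, hl⟩ := ih m (n - 1) (by omega)
          exact ⟨P1, fun _ => ⟨hd', he, hl⟩, fun hn => by omega⟩
      obtain ⟨P2, hP2, hP2z⟩ : ∃ P2 : ℝ[X],
          (m ≠ 0 → P2.degree = ((m - 1 + 2 * n : ℕ) : WithBot ℕ) ∧
            (∀ x : ℕ, V (m - 1) n x = P2.eval (x : ℝ)) ∧ 0 < P2.leadingCoeff) ∧
          (m = 0 → P2 = 0) := by
        rcases Nat.eq_zero_or_pos m with h | h
        · exact ⟨0, fun hm => absurd h hm, fun _ => rfl⟩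
        · obtain ⟨P2, hd', _, he, hl⟩ := ih (m - 1) n (by omega)
          exact ⟨P2, fun _ => ⟨hd', he, hl⟩, fun hm => by omega⟩
      set A : ℝ[X] := C (n : ℝ) * (X * P1) with hA_def
      set B : ℝ[X] := C (m : ℝ) * P2 with hB_def
      set Q : ℝ[X] := A + B with hQ_def
      have hA : A.natDegree ≤ d ∧ 0 ≤ A.coeff d ∧ (n ≠ 0 → 0 < A.coeff d) := by
        rcases Nat.eq_zero_or_pos n with h | h
        · have : A = 0 := by rw [hA_def, h]; simp
          rw [this]; exact ⟨by simp, by simp, fun hn => absurd h hn⟩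
        · obtain ⟨hd', _, hl⟩ := hP1 (by omega)
          have hP10 : P1 ≠ 0 := leadingCoeff_ne_zero.mp (ne_of_gt hl)
          have hnat1 : P1.natDegree = m + 2 * (n - 1) :=
            natDegree_eq_of_degree_eq_some hd'
          have hdeg : A.natDegree ≤ d := by
            refine (natDegree_C_mul_le _ _).trans ?_
            refine natDegree_mul_le.trans ?_
            rw [natDegree_X, hnat1]; omega
          have hco : A.coeff d = (n : ℝ) * P1.leadingCoeff := by
            have hdd : d = (d - 1) + 1 := by omega
            rw [hA_def, coeff_C_mul, hdd, coeff_X_mul]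
            have : d - 1 = P1.natDegree := by rw [hnat1]; omega
            rw [this, ← leadingCoeff]
          have hpos : 0 < A.coeff d := by
            rw [hco]
            have : (0 : ℝ) < n := by exact_mod_cast h
            positivity
          exact ⟨hdeg, le_of_lt hpos, fun _ => hpos⟩
      have hB : B.natDegree ≤ d ∧ 0 ≤ B.coeff d ∧ (m ≠ 0 → 0 < B.coeff d) := by
        rcases Nat.eq_zero_or_pos m with h | h
        · have : B = 0 := by rw [hB_def, h]; simp
          rw [this]; exact ⟨by simp, by simp, fun hm => absurd h hm⟩
        · obtain ⟨hd', _, hl⟩ := hP2 (by omega)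
          have hnat2 : P2.natDegree = m - 1 + 2 * n :=
            natDegree_eq_of_degree_eq_some hd'
          have hdeg : B.natDegree ≤ d := by
            refine (natDegree_C_mul_le _ _).trans ?_
            rw [hnat2]; omega
          have hco : B.coeff d = (m : ℝ) * P2.leadingCoeff := by
            have : d = P2.natDegree := by rw [hnat2]; omega
            rw [hB_def, coeff_C_mul, this, ← leadingCoeff]
          have hpos : 0 < B.coeff d := by
            rw [hco]
            have : (0 : ℝ) < m := by exact_mod_cast h
            positivity
          exact ⟨hdeg, le_of_lt hpos, fun _ => hpos⟩
      have hQd : Q.natDegree ≤ d :=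
        (natDegree_add_le _ _).trans (max_le hA.1 hB.1)
      have hQc : 0 < Q.coeff d := by
        rw [hQ_def, coeff_add]
        rcases Nat.eq_zero_or_pos m with h | h
        · have hn : n ≠ 0 := fun hn => h0' ⟨h, hn⟩
          have := hA.2.2 hn
          linarith [hB.2.1]
        · have := hB.2.2 (by omega)
          linarith [hA.2.1]
      have hQne : Q.coeff d ≠ 0 := ne_of_gt hQc
      have hQ0 : Q ≠ 0 := fun h => hQne (by simp [h])
      have hQnat : Q.natDegree = d := le_antisymm hQd (le_natDegree_of_ne_zero hQne)
      have hQlead : Q.leadingCoeff = Q.coeff d := by rw [leadingCoeff, hQnat]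
      -- Q' := θ⁻¹ • Q
      have hθ0 : θ⁻¹ ≠ 0 := inv_ne_zero (ne_of_gt hθ)
      set Q' : ℝ[X] := C θ⁻¹ * Q with hQ'_def
      have hQ'0 : Q' ≠ 0 := mul_ne_zero (C_ne_zero.mpr hθ0) hQ0
      have hQ'nat : Q'.natDegree = d := by rw [hQ'_def, natDegree_C_mul hθ0, hQnat]
      have hQ'lead : 0 < Q'.leadingCoeff := by
        rw [hQ'_def, leadingCoeff_mul, leadingCoeff_C, hQlead]
        have : 0 < θ⁻¹ := by positivity
        positivity
      obtain ⟨P, _, hPz, hPdiff, hPmain⟩ := antider d Q' (le_of_eq hQ'nat)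
      obtain ⟨hPdeg, hPlead⟩ := hPmain hQ'nat hQ'0
      have hVP : ∀ x : ℕ, V m n x = P.eval (x : ℝ) := by
        intro x
        induction x with
        | zero => rw [hzero m n h0]; simpa using hPz.symm
        | succ x ihx =>
          have hr := hrec m n h0 (x + 1) (by omega)
          rw [Nat.add_sub_cancel] at hr
          have hx1 : ((x + 1 : ℕ) : ℝ) = (x : ℝ) + 1 := by push_cast; ring
          have h1 : (n : ℝ) * ((x + 1 : ℕ) : ℝ) * V m (n - 1) (x + 1)
              = A.eval ((x : ℝ) + 1) := by
            rcases Nat.eq_zero_or_pos n with h | h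
            · simp [hA_def, h]
            · rw [(hP1 (by omega)).2.1 (x + 1), hx1, hA_def]
              simp; ring
          have h2 : (m : ℝ) * V (m - 1) n (x + 1) = B.eval ((x : ℝ) + 1) := by
            rcases Nat.eq_zero_or_pos m with h | h
            · simp [hB_def, h]
            · rw [(hP2 (by omega)).2.1 (x + 1), hx1, hB_def]; simp
          rw [h1, h2] at hr
          have hQev : A.eval ((x : ℝ) + 1) + B.eval ((x : ℝ) + 1) = Q.eval ((x : ℝ) + 1) := by
            rw [hQ_def]; simp
          rw [hQev] at hr
          have hPd := hPdiff (x : ℝ)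
          rw [hQ'_def] at hPd
          simp only [eval_mul, eval_C] at hPd
          rw [ihx] at hr
          rw [hx1]
          have hθne : θ ≠ 0 := ne_of_gt hθ
          field_simp at hPd
          nlinarith [hr, hPd]
      refine ⟨P, ?_, fun _ => hPz, hVP, ?_⟩
      · rw [hPdeg]
        congr 1
        omega
      · rw [hPlead]
        apply div_pos hQ'lead
        positivity
end

section
/- Let μ > 0, θ > 0 and λ > 0. Define M₁(x) = (λ/(θ+λ))·e^{−(θ+λ)x/μ} + θ/(θ+λ) and M₂(x) = (λ(λ+2θ)/(θ+λ)²)·e^{−(θ+λ)x/μ} + (θλ/(μ(θ+λ)))·x·e^{−(θ+λ)(x−1)/μ} + θ²/(θ+λ)². Then for every x ∈ ℝ, μ·M₂'(x) + (θ+λ)·M₂(x) = θ·M₁(x−1). -/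
/-!
`e^{-kx/μ}` solves the homogeneous equation `μ f' + k f = 0`, so its coefficient is
irrelevant, while `x e^{-k(x-a)/μ}` is sent to `μ e^{-k(x-a)/μ}` (resonance) and a constant
`C` to `k C`. For `k = θ + λ` the forcing `θ M₁(x - 1)` is a multiple of `e^{-k(x-1)/μ}`
plus a constant, and matching coefficients finishes the proof.
-/

open Real

theorem hasDerivAt_exp_neg_mul_sub_div (k μ a x : ℝ) :
    HasDerivAt (fun t => exp (-k * (t - a) / μ)) (-k / μ * exp (-k * (x - a) / μ)) x := by
  have hlin : HasDerivAt (fun t => -k * (t - a) / μ) (-k / μ) x := by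
    simpa using (((hasDerivAt_id x).sub_const a).const_mul (-k)).div_const μ
  simpa [mul_comm] using hlin.exp

theorem mul_deriv_add_mul_eq_of_resonant_form {μ : ℝ} (hμ : μ ≠ 0) (k A B C a : ℝ) {f : ℝ → ℝ}
    (hf : ∀ x, f x = A * exp (-k * x / μ) + B * x * exp (-k * (x - a) / μ) + C) (x : ℝ) :
    μ * deriv f x + k * f x = μ * B * exp (-k * (x - a) / μ) + k * C := by
  have hhom := (hasDerivAt_exp_neg_mul_sub_div k μ 0 x).const_mul A
  have hres := ((hasDerivAt_id' x).const_mul B).mul (hasDerivAt_exp_neg_mul_sub_div k μ a x)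
  have hderiv : HasDerivAt f (A * (-k / μ * exp (-k * x / μ))
      + (B * exp (-k * (x - a) / μ) + B * x * (-k / μ * exp (-k * (x - a) / μ)))) x := by
    have hsum := (hhom.add hres).add_const C
    simp only [sub_zero, mul_one] at hsum
    refine hsum.congr_of_eventuallyEq (.of_forall fun t => ?_)
    simp only [hf, Pi.add_apply, Pi.mul_apply]
  rw [hderiv.deriv, hf]
  field_simp
  ring

/-- For the Poisson process with drift, the Laplace transform of the first-passage time
on `(1,2]`, `M₂`, satisfies `μM₂'(x) + (θ+λ)M₂(x) = θ M₁(x-1)`, where `M₁` is the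
Laplace transform on `(0,1]`. -/
theorem stmt_17 (μ θ lam : ℝ) (hμ : 0 < μ) (hθ : 0 < θ) (hlam : 0 < lam)
    (M₁ M₂ : ℝ → ℝ)
    (hM₁ : ∀ x : ℝ, M₁ x = (lam / (θ + lam)) * Real.exp (-(θ + lam) * x / μ) + θ / (θ + lam))
    (hM₂ : ∀ x : ℝ, M₂ x = (lam * (lam + 2 * θ) / (θ + lam) ^ 2) * Real.exp (-(θ + lam) * x / μ)
      + (θ * lam / (μ * (θ + lam))) * x * Real.exp (-(θ + lam) * (x - 1) / μ)
      + θ ^ 2 / (θ + lam) ^ 2) :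
    ∀ x : ℝ, μ * deriv M₂ x + (θ + lam) * M₂ x = θ * M₁ (x - 1) := by
  intro x
  have hk : θ + lam ≠ 0 := by positivity
  rw [mul_deriv_add_mul_eq_of_resonant_form hμ.ne' _ _ _ _ _ hM₂ x, hM₁]
  field_simp
end

section
/- Let μ ≥ 0, σ > 0, θ > 0 and λ > 0, and set r = (μ − √(μ² + 2σ²(λ+θ)))/σ². Define M(x) = (λ/(λ+θ))·e^{rx} + θ/(λ+θ). Then M(0) = 1, r < 0 (so e^{rx} → 0 as x → +∞), and for every x ∈ ℝ, (σ²/2)·M''(x) − μ·M'(x) − (λ+θ)·M(x) + θ = 0. -/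
/-! Since `M` is affine in `e^{rx}`, the equation reduces to the characteristic equation
`σ²/2 · r² - μ r = λ + θ`, of which `r` is the negative root because `√(μ² + 2σ²(λ+θ)) > μ`. -/

open Real Filter

lemma sub_sqrt_sq_add_neg (μ : ℝ) {c : ℝ} (hc : 0 < c) : μ - √(μ ^ 2 + c) < 0 :=
  sub_neg.2 (lt_sqrt_of_sq_lt (by linarith))

lemma characteristic_root_eq {μ σ k : ℝ} (hσ : σ ≠ 0) (hk : 0 ≤ k) :
    σ ^ 2 / 2 * ((μ - √(μ ^ 2 + 2 * σ ^ 2 * k)) / σ ^ 2) ^ 2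
      - μ * ((μ - √(μ ^ 2 + 2 * σ ^ 2 * k)) / σ ^ 2) = k := by
  have hsq : √(μ ^ 2 + 2 * σ ^ 2 * k) ^ 2 = μ ^ 2 + 2 * σ ^ 2 * k := sq_sqrt (by positivity)
  generalize √(μ ^ 2 + 2 * σ ^ 2 * k) = s at hsq ⊢
  field_simp
  linear_combination hsq

lemma deriv_const_mul_exp_mul (a r : ℝ) :
    deriv (fun x => a * exp (r * x)) = fun x => a * r * exp (r * x) := by
  funext x
  simpa [mul_comm, mul_left_comm, mul_assoc] using
    ((hasDerivAt_mul_const r).exp.const_mul a).deriv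

theorem stmt_19_general (μ σ θ lam : ℝ) (hσ : 0 < σ) (hθ : 0 < θ) (hlam : 0 < lam)
    (r : ℝ) (hr : r = (μ - Real.sqrt (μ ^ 2 + 2 * σ ^ 2 * (lam + θ))) / σ ^ 2)
    (M : ℝ → ℝ)
    (hM : ∀ x : ℝ, M x = (lam / (lam + θ)) * Real.exp (r * x) + θ / (lam + θ)) :
    M 0 = 1 ∧
    r < 0 ∧
    Filter.Tendsto (fun x : ℝ => Real.exp (r * x)) Filter.atTop (nhds 0) ∧
    (∀ x : ℝ, σ ^ 2 / 2 * deriv (deriv M) x - μ * deriv M x - (lam + θ) * M x + θ = 0) := by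
  have hk : 0 < lam + θ := add_pos hlam hθ
  have hr_neg : r < 0 :=
    hr ▸ div_neg_of_neg_of_pos (sub_sqrt_sq_add_neg μ (by positivity)) (by positivity)
  have hroot : σ ^ 2 / 2 * r ^ 2 - μ * r = lam + θ := hr ▸ characteristic_root_eq hσ.ne' hk.le
  have hM' : M = fun x => lam / (lam + θ) * exp (r * x) + θ / (lam + θ) := funext hM
  have hdM : deriv M = fun x => lam / (lam + θ) * r * exp (r * x) := by
    rw [hM']
    funext x
    simp only [deriv_add_const, deriv_const_mul_exp_mul]
  have hd2M : deriv (deriv M) = fun x => lam / (lam + θ) * r * r * exp (r * x) := by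
    rw [hdM, deriv_const_mul_exp_mul]
  refine ⟨?_, hr_neg, tendsto_exp_atBot.comp (tendsto_id.const_mul_atTop_of_neg hr_neg), ?_⟩
  · rw [hM, mul_zero, exp_zero, mul_one, ← add_div, div_self hk.ne']
  · intro x
    rw [hd2M, hdM, hM]
    linear_combination (lam / (lam + θ) * exp (r * x)) * hroot
      - (mul_div_cancel₀ θ hk.ne' : (lam + θ) * (θ / (lam + θ)) = θ)

/-- For the drifted Brownian motion with Poisson jumps, with
`r = (μ - √(μ² + 2σ²(λ+θ)))/σ²`, the function `M(x) = (λ/(λ+θ))e^{rx} + θ/(λ+θ)`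
satisfies `M(0) = 1`, `r < 0` (so `e^{rx} → 0` as `x → ∞`), and the ODE
`(σ²/2)M''(x) - μM'(x) - (λ+θ)M(x) + θ = 0`. -/
theorem stmt_19 (μ σ θ lam : ℝ) (hμ : 0 ≤ μ) (hσ : 0 < σ) (hθ : 0 < θ) (hlam : 0 < lam)
    (r : ℝ) (hr : r = (μ - Real.sqrt (μ ^ 2 + 2 * σ ^ 2 * (lam + θ))) / σ ^ 2)
    (M : ℝ → ℝ)
    (hM : ∀ x : ℝ, M x = (lam / (lam + θ)) * Real.exp (r * x) + θ / (lam + θ)) :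
    M 0 = 1 ∧
    r < 0 ∧
    Filter.Tendsto (fun x : ℝ => Real.exp (r * x)) Filter.atTop (nhds 0) ∧
    (∀ x : ℝ, σ ^ 2 / 2 * deriv (deriv M) x - μ * deriv M x - (lam + θ) * M x + θ = 0) :=
  stmt_19_general μ σ θ lam hσ hθ hlam r hr M hM
end
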